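/- Suppose the step sizes satisfy 0 < inf_k δ_k ≤ sup_k δ_k < 2. Then the sequence {X^k} produced by the SVT iteration X^k = D_τ(Y^{k−1}), Y^k = Y^{k−1} + δ_k P_Ω(M − X^k), started from Y⁰ = 0, converges to the unique solution of: minimize τ‖X‖_* + (1/2)‖X‖_F² subject to P_Ω(X) = P_Ω(M). -/

import Mathlib

open Matrix Filter Topology

noncomputable def frob {n₁ n₂ : ℕ} (X : Matrix (Fin n₁) (Fin n₂) ℝ) : ℝ :=
  Real.sqrt (∑ i, ∑ j, (X i j) ^ 2)

noncomputable def mInner {n₁ n₂ : ℕ} (X Y : Matrix (Fin n₁) (Fin n₂) ℝ) : ℝ :=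
  ∑ i, ∑ j, X i j * Y i j

noncomputable def singVal {n₁ n₂ : ℕ} (X : Matrix (Fin n₁) (Fin n₂) ℝ) (j : Fin n₂) : ℝ :=
  Real.sqrt ((Matrix.isHermitian_conjTranspose_mul_self X).eigenvalues j)

noncomputable def nuclearNorm {n₁ n₂ : ℕ} (X : Matrix (Fin n₁) (Fin n₂) ℝ) : ℝ :=
  ∑ j, singVal X j

noncomputable def specNorm {n₁ n₂ : ℕ} (X : Matrix (Fin n₁) (Fin n₂) ℝ) : ℝ :=
  ⨆ j, singVal X j

noncomputable def ftau {n₁ n₂ : ℕ} (τ : ℝ) (X : Matrix (Fin n₁) (Fin n₂) ℝ) : ℝ :=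
  τ * nuclearNorm X + (1 / 2) * frob X ^ 2

def projSet {n₁ n₂ : ℕ} (Ω : Finset (Fin n₁ × Fin n₂)) (X : Matrix (Fin n₁) (Fin n₂) ℝ) :
    Matrix (Fin n₁) (Fin n₂) ℝ :=
  Matrix.of fun i j => if (i, j) ∈ Ω then X i j else 0

def IsSubgradAt {n₁ n₂ : ℕ} (f : Matrix (Fin n₁) (Fin n₂) ℝ → ℝ)
    (Z X₀ : Matrix (Fin n₁) (Fin n₂) ℝ) : Prop :=
  ∀ X, f X₀ + mInner Z (X - X₀) ≤ f X

noncomputable def eNorm {m : ℕ} (v : Fin m → ℝ) : ℝ := Real.sqrt (∑ i, v i ^ 2)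

noncomputable def eInner {m : ℕ} (v w : Fin m → ℝ) : ℝ := ∑ i, v i * w i

/-
The nuclear norm is convex: it is the maximum of the linear functionals
`X ↦ ∑ₖ ⟪pₖ, X qₖ⟫` over pairs of orthonormal families (von Neumann's trace inequality, which
follows from Bessel's inequality in an eigenbasis of `Xᴴ X`). Hence `X^{k+1}` is the proximal
point of `Y^k` for the convex function `τ‖·‖_*`, and the map `Y ↦ X` is firmly nonexpansive.
The SVT iteration is then Uzawa's method: for a saddle point `(X*, Y*)`, each step decreases
`‖Y^k - P_Ω Y*‖²` by at least `δ_k (2 - δ_k) ‖X^{k+1} - X*‖²`, so these squared distances are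
summable and `X^k → X*`. Optimality and uniqueness of `X*`: `P_Ω Y*` is a subgradient at `X*` of
the `1`-strongly convex objective `τ‖·‖_* + ½‖·‖_F²`, and it is orthogonal to the directions of
the constraint set `P_Ω X = P_Ω M`.
-/

section NuclearNorm

open scoped RealInnerProductSpace

variable {n₁ n₂ : ℕ}

noncomputable abbrev rightSingularBasis (X : Matrix (Fin n₁) (Fin n₂) ℝ) :
    OrthonormalBasis (Fin n₂) ℝ (EuclideanSpace ℝ (Fin n₂)) :=
  (isHermitian_conjTranspose_mul_self X).eigenvectorBasis

theorem inner_toEuclideanLin_rightSingularBasis (X : Matrix (Fin n₁) (Fin n₂) ℝ)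
    (v : EuclideanSpace ℝ (Fin n₂)) (j : Fin n₂) :
    ⟪toEuclideanLin X v, toEuclideanLin X (rightSingularBasis X j)⟫ =
      (isHermitian_conjTranspose_mul_self X).eigenvalues j * ⟪v, rightSingularBasis X j⟫ := by
  have hgram : toEuclideanLin (Xᴴ * X) (rightSingularBasis X j) =
      (isHermitian_conjTranspose_mul_self X).eigenvalues j • rightSingularBasis X j := by
    rw [toLpLin_apply, (isHermitian_conjTranspose_mul_self X).mulVec_eigenvectorBasis]
    rfl
  rw [← LinearMap.adjoint_inner_right, ← toEuclideanLin_conjTranspose_eq_adjoint,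
    ← LinearMap.comp_apply, ← toLpLin_mul, hgram, inner_smul_right]

theorem norm_toEuclideanLin_rightSingularBasis (X : Matrix (Fin n₁) (Fin n₂) ℝ) (j : Fin n₂) :
    ‖toEuclideanLin X (rightSingularBasis X j)‖ = singVal X j := by
  have h := inner_toEuclideanLin_rightSingularBasis X (rightSingularBasis X j) j
  rw [real_inner_self_eq_norm_sq, real_inner_self_eq_norm_sq,
    (rightSingularBasis X).orthonormal.1 j, one_pow, mul_one] at h
  rw [singVal, ← h, Real.sqrt_sq (norm_nonneg _)]

theorem nuclearNorm_eq_sum_norm_toEuclideanLin (X : Matrix (Fin n₁) (Fin n₂) ℝ) :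
    nuclearNorm X = ∑ j, ‖toEuclideanLin X (rightSingularBasis X j)‖ := by
  simp only [nuclearNorm, norm_toEuclideanLin_rightSingularBasis]

theorem Orthonormal.sqrt_sum_inner_sq_le {E ι : Type*} [NormedAddCommGroup E]
    [InnerProductSpace ℝ E] [Fintype ι] {v : ι → E} (hv : Orthonormal ℝ v) (x : E) :
    √(∑ k, ⟪v k, x⟫ ^ 2) ≤ ‖x‖ := by
  refine Real.sqrt_le_iff.2 ⟨norm_nonneg x, ?_⟩
  simpa only [Real.norm_eq_abs, sq_abs] using hv.sum_inner_products_le x (s := Finset.univ)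

theorem Orthonormal.sum_inner_mul_inner_le {E F ι : Type*} [NormedAddCommGroup E]
    [InnerProductSpace ℝ E] [NormedAddCommGroup F] [InnerProductSpace ℝ F] [Fintype ι]
    {p : ι → E} {q : ι → F} (hp : Orthonormal ℝ p) (hq : Orthonormal ℝ q) (x : E) (y : F) :
    ∑ k, ⟪p k, x⟫ * ⟪q k, y⟫ ≤ ‖x‖ * ‖y‖ :=
  calc ∑ k, ⟪p k, x⟫ * ⟪q k, y⟫ ≤ √(∑ k, ⟪p k, x⟫ ^ 2) * √(∑ k, ⟪q k, y⟫ ^ 2) :=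
        Real.sum_mul_le_sqrt_mul_sqrt _ _ _
    _ ≤ ‖x‖ * ‖y‖ := mul_le_mul (hp.sqrt_sum_inner_sq_le x) (hq.sqrt_sum_inner_sq_le y)
        (Real.sqrt_nonneg _) (norm_nonneg x)

theorem sum_inner_toEuclideanLin_le_nuclearNorm {ι : Type*} [Fintype ι]
    (X : Matrix (Fin n₁) (Fin n₂) ℝ) {p : ι → EuclideanSpace ℝ (Fin n₁)}
    {q : ι → EuclideanSpace ℝ (Fin n₂)} (hp : Orthonormal ℝ p) (hq : Orthonormal ℝ q) :
    ∑ k, ⟪p k, toEuclideanLin X (q k)⟫ ≤ nuclearNorm X := by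
  set w := rightSingularBasis X
  have hexpand : ∀ k, ⟪p k, toEuclideanLin X (q k)⟫ =
      ∑ j, ⟪p k, toEuclideanLin X (w j)⟫ * ⟪q k, w j⟫ := fun k => by
    rw [← LinearMap.adjoint_inner_left, ← w.sum_inner_mul_inner]
    simp only [LinearMap.adjoint_inner_left, real_inner_comm (w _) (q k)]
  calc ∑ k, ⟪p k, toEuclideanLin X (q k)⟫
      = ∑ j, ∑ k, ⟪p k, toEuclideanLin X (w j)⟫ * ⟪q k, w j⟫ := by
        simp only [hexpand]; exact Finset.sum_comm
    _ ≤ ∑ j, ‖toEuclideanLin X (w j)‖ * ‖w j‖ :=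
        Finset.sum_le_sum fun j _ => hp.sum_inner_mul_inner_le hq _ _
    _ = nuclearNorm X := by
        simp only [w.orthonormal.1, mul_one, nuclearNorm_eq_sum_norm_toEuclideanLin, w]

theorem exists_orthonormal_nuclearNorm_eq_sum_inner (X : Matrix (Fin n₁) (Fin n₂) ℝ) :
    ∃ (ι : Type) (_ : Fintype ι) (p : ι → EuclideanSpace ℝ (Fin n₁))
      (q : ι → EuclideanSpace ℝ (Fin n₂)), Orthonormal ℝ p ∧ Orthonormal ℝ q ∧
      nuclearNorm X = ∑ k, ⟪p k, toEuclideanLin X (q k)⟫ := by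
  classical
  rw [nuclearNorm_eq_sum_norm_toEuclideanLin]
  set w := rightSingularBasis X
  set S := {j // ‖toEuclideanLin X (w j)‖ ≠ 0}
  refine ⟨S, inferInstance, fun j => ‖toEuclideanLin X (w j)‖⁻¹ • toEuclideanLin X (w j),
    fun j => w j, ?_, w.orthonormal.comp _ Subtype.val_injective, ?_⟩
  · rw [orthonormal_iff_ite]
    rintro ⟨i, hi⟩ ⟨j, hj⟩
    rw [real_inner_smul_left, real_inner_smul_right]
    by_cases hij : i = j
    · subst hij
      rw [if_pos rfl, real_inner_self_eq_norm_sq]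
      field_simp
    · rw [if_neg (fun h => hij (congrArg Subtype.val h)),
        inner_toEuclideanLin_rightSingularBasis, w.orthonormal.2 hij, mul_zero, mul_zero, mul_zero]
  · rw [← Finset.sum_filter_ne_zero,
      Finset.sum_subtype _ (p := fun j => ‖toEuclideanLin X (w j)‖ ≠ 0) (by simp)]
    refine Finset.sum_congr rfl fun ⟨j, hj⟩ _ => ?_
    rw [real_inner_smul_left, real_inner_self_eq_norm_sq]
    field_simp

theorem convexOn_nuclearNorm :
    ConvexOn ℝ Set.univ (nuclearNorm : Matrix (Fin n₁) (Fin n₂) ℝ → ℝ) := by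
  refine ⟨convex_univ, fun A _ B _ a b ha hb _ => ?_⟩
  obtain ⟨ι, _, p, q, hp, hq, hC⟩ := exists_orthonormal_nuclearNorm_eq_sum_inner (a • A + b • B)
  calc nuclearNorm (a • A + b • B)
      = a * ∑ k, ⟪p k, toEuclideanLin A (q k)⟫ + b * ∑ k, ⟪p k, toEuclideanLin B (q k)⟫ := by
        simp only [hC, map_add, map_smul, LinearMap.add_apply, LinearMap.smul_apply,
          inner_add_right, real_inner_smul_right, Finset.sum_add_distrib, Finset.mul_sum]
    _ ≤ a * nuclearNorm A + b * nuclearNorm B := by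
        gcongr <;> exact sum_inner_toEuclideanLin_le_nuclearNorm _ hp hq

end NuclearNorm

section Proximal

open Set
open scoped RealInnerProductSpace

variable {E : Type*} [NormedAddCommGroup E] [InnerProductSpace ℝ E] {f : E → ℝ} {x y : E}

theorem ConvexOn.add_inner_le_of_isMinOn_prox (hf : ConvexOn ℝ univ f)
    (hx : IsMinOn (fun z => f z + 1 / 2 * ‖z - y‖ ^ 2) univ x) (z : E) :
    f x + ⟪y - x, z - x⟫ ≤ f z := by
  -- compare `x` with the points `x + t • (z - x)` of the segment `[x, z]`, then let `t → 0⁺`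
  have hsmall : ∀ t ∈ Ioo (0 : ℝ) 1, f x + ⟪y - x, z - x⟫ ≤ f z + t / 2 * ‖z - x‖ ^ 2 := by
    rintro t ⟨ht0, ht1⟩
    have hmin := isMinOn_univ_iff.1 hx (x + t • (z - x))
    have hconv : f (x + t • (z - x)) ≤ (1 - t) * f x + t * f z := by
      have h := hf.2 (mem_univ x) (mem_univ z) (sub_nonneg.2 ht1.le) ht0.le (sub_add_cancel 1 t)
      rwa [show (1 - t) • x + t • z = x + t • (z - x) by module, smul_eq_mul, smul_eq_mul] at h
    have hnorm : ‖x + t • (z - x) - y‖ ^ 2 =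
        ‖x - y‖ ^ 2 + 2 * t * ⟪x - y, z - x⟫ + t ^ 2 * ‖z - x‖ ^ 2 := by
      rw [show x + t • (z - x) - y = (x - y) + t • (z - x) by abel, norm_add_sq_real,
        real_inner_smul_right, norm_smul, mul_pow, Real.norm_eq_abs, sq_abs]
      ring
    have hneg : ⟪y - x, z - x⟫ = -⟪x - y, z - x⟫ := by rw [← inner_neg_left, neg_sub]
    rw [hnorm] at hmin
    refine le_of_mul_le_mul_left ?_ ht0
    nlinarith
  have hlim : Tendsto (fun t : ℝ => f z + t / 2 * ‖z - x‖ ^ 2) (𝓝[>] 0) (𝓝 (f z)) := by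
    refine tendsto_nhdsWithin_of_tendsto_nhds ?_
    simpa using ((continuous_id.div_const 2).mul continuous_const).const_add (f z) |>.tendsto 0
  exact ge_of_tendsto hlim (eventually_of_mem (Ioo_mem_nhdsGT one_pos) hsmall)

theorem ConvexOn.norm_sub_sq_le_inner_of_isMinOn_prox (hf : ConvexOn ℝ univ f) {x' y' : E}
    (hx : IsMinOn (fun z => f z + 1 / 2 * ‖z - y‖ ^ 2) univ x)
    (hx' : IsMinOn (fun z => f z + 1 / 2 * ‖z - y'‖ ^ 2) univ x') :
    ‖x - x'‖ ^ 2 ≤ ⟪x - x', y - y'⟫ := by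
  have h := hf.add_inner_le_of_isMinOn_prox hx x'
  have h' := hf.add_inner_le_of_isMinOn_prox hx' x
  have hsum : ⟪y - x, x' - x⟫ + ⟪y' - x', x - x'⟫ = ‖x - x'‖ ^ 2 - ⟪x - x', y - y'⟫ := by
    rw [← real_inner_self_eq_norm_sq]
    simp only [inner_sub_left, inner_sub_right, real_inner_comm]
    ring
  linarith

theorem ConvexOn.add_half_norm_sq_le_of_isMinOn_prox (hf : ConvexOn ℝ univ f)
    (hx : IsMinOn (fun z => f z + 1 / 2 * ‖z - y‖ ^ 2) univ x) (z : E) :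
    f x + 1 / 2 * ‖x‖ ^ 2 + 1 / 2 * ‖z - x‖ ^ 2 + ⟪y, z - x⟫ ≤ f z + 1 / 2 * ‖z‖ ^ 2 := by
  have h := hf.add_inner_le_of_isMinOn_prox hx z
  have hz : ‖z‖ ^ 2 = ‖x‖ ^ 2 + 2 * ⟪x, z - x⟫ + ‖z - x‖ ^ 2 := by
    rw [← norm_add_sq_real, add_sub_cancel]
  rw [inner_sub_left] at h
  linarith

end Proximal

theorem tendsto_zero_of_add_mul_le {V D : ℕ → ℝ} {c : ℝ} (hc : 0 < c) (hV : ∀ k, 0 ≤ V k)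
    (hD : ∀ k, 0 ≤ D k) (h : ∀ k, V (k + 1) + c * D k ≤ V k) : Tendsto D atTop (𝓝 0) := by
  have htelescope : ∀ n, ∑ k ∈ Finset.range n, c * D k + V n ≤ V 0 := by
    intro n
    induction n with
    | zero => simp
    | succ n ih => rw [Finset.sum_range_succ]; linarith [h n]
  have hsum : Summable fun k => c * D k :=
    summable_of_sum_range_le (c := V 0) (fun k => mul_nonneg hc.le (hD k))
      fun n => by linarith [htelescope n, hV n]
  simpa [hc.ne'] using hsum.tendsto_atTop_zero.const_mul c⁻¹

section Uzawa

open Set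
open scoped RealInnerProductSpace

variable {E : Type*} [NormedAddCommGroup E] [InnerProductSpace ℝ E] {f : E → ℝ}
  {P : E →ₗ[ℝ] E} {m xs ys : E}

theorem LinearMap.IsSymmetric.norm_map_le_of_isIdempotentElem (hP : P.IsSymmetric)
    (hPP : IsIdempotentElem P) (v : E) : ‖P v‖ ≤ ‖v‖ := by
  have h : ‖P v‖ * ‖P v‖ ≤ ‖v‖ * ‖P v‖ := by
    rw [← real_inner_self_eq_norm_mul_norm, hP, ← Module.End.mul_apply, hPP.eq]
    exact real_inner_le_norm v (P v)
  nlinarith [norm_nonneg v, norm_nonneg (P v)]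

theorem eq_zero_of_forall_inner_le {r y₀ : E} (h : ∀ y, ⟪y, r⟫ ≤ ⟪y₀, r⟫) : r = 0 := by
  have hr := h (y₀ + r)
  rw [inner_add_left, real_inner_self_eq_norm_sq] at hr
  exact norm_eq_zero.1 (pow_eq_zero_iff two_ne_zero |>.1 (by linarith [sq_nonneg ‖r‖]))

theorem LinearMap.IsSymmetric.isMinOn_prox_of_forall_lagrangian_le (hP : P.IsSymmetric)
    (h : ∀ x, f xs + 1 / 2 * ‖xs‖ ^ 2 + ⟪ys, P (m - xs)⟫ ≤
      f x + 1 / 2 * ‖x‖ ^ 2 + ⟪ys, P (m - x)⟫) :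
    IsMinOn (fun z => f z + 1 / 2 * ‖z - P ys‖ ^ 2) univ xs := by
  refine isMinOn_univ_iff.2 fun z => ?_
  have hz := h z
  simp only [map_sub, inner_sub_right, ← hP ys] at hz
  simp only [norm_sub_sq_real, real_inner_comm (P ys)]
  linarith

theorem ConvexOn.add_half_norm_sq_le_of_map_eq (hf : ConvexOn ℝ univ f) (hP : P.IsSymmetric)
    (hxs : IsMinOn (fun z => f z + 1 / 2 * ‖z - P ys‖ ^ 2) univ xs) {z : E} (hz : P z = P xs) :
    f xs + 1 / 2 * ‖xs‖ ^ 2 + 1 / 2 * ‖z - xs‖ ^ 2 ≤ f z + 1 / 2 * ‖z‖ ^ 2 := by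
  have h := hf.add_half_norm_sq_le_of_isMinOn_prox hxs z
  rwa [hP, map_sub, hz, sub_self, inner_zero_right, add_zero] at h

theorem ConvexOn.uzawa_descent (hf : ConvexOn ℝ univ f) (hP : P.IsSymmetric)
    (hPP : IsIdempotentElem P) (hxs : IsMinOn (fun z => f z + 1 / 2 * ‖z - P ys‖ ^ 2) univ xs)
    (hfeas : P xs = P m) {x y : E} (hy : P y = y)
    (hx : IsMinOn (fun z => f z + 1 / 2 * ‖z - y‖ ^ 2) univ x) {δ : ℝ} (hδ : 0 ≤ δ) :
    ‖y + δ • P (m - x) - P ys‖ ^ 2 + δ * (2 - δ) * ‖x - xs‖ ^ 2 ≤ ‖y - P ys‖ ^ 2 := by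
  have hsplit : y + δ • P (m - x) - P ys = (y - P ys) + δ • P (xs - x) := by
    rw [map_sub, map_sub, hfeas]; abel
  set u := y - P ys
  have hPu : P u = u := by rw [map_sub, hy, ← Module.End.mul_apply, hPP.eq]
  have hcross : ⟪u, P (xs - x)⟫ ≤ -‖x - xs‖ ^ 2 := by
    have hfirm := hf.norm_sub_sq_le_inner_of_isMinOn_prox hx hxs
    rw [← hP, hPu, ← neg_sub x xs, inner_neg_right, real_inner_comm]
    linarith
  have hcontr : ‖P (xs - x)‖ ^ 2 ≤ ‖x - xs‖ ^ 2 := by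
    rw [← norm_neg (x - xs), neg_sub]
    exact pow_le_pow_left₀ (norm_nonneg _) (hP.norm_map_le_of_isIdempotentElem hPP _) 2
  rw [hsplit, norm_add_sq_real, real_inner_smul_right, norm_smul, mul_pow, Real.norm_eq_abs,
    sq_abs]
  nlinarith [mul_le_mul_of_nonneg_left hcross hδ, mul_le_mul_of_nonneg_left hcontr (sq_nonneg δ)]

theorem ConvexOn.tendsto_uzawa (hf : ConvexOn ℝ univ f) (hP : P.IsSymmetric)
    (hPP : IsIdempotentElem P) (hxs : IsMinOn (fun z => f z + 1 / 2 * ‖z - P ys‖ ^ 2) univ xs)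
    (hfeas : P xs = P m) {δ : ℕ → ℝ} {a b : ℝ} (ha : 0 < a) (hb : b < 2)
    (hδ : ∀ k, a ≤ δ k ∧ δ k ≤ b) {x y : ℕ → E} (hy0 : P (y 0) = y 0)
    (hx : ∀ k, IsMinOn (fun z => f z + 1 / 2 * ‖z - y k‖ ^ 2) univ (x (k + 1)))
    (hy : ∀ k, y (k + 1) = y k + δ (k + 1) • P (m - x (k + 1))) :
    Tendsto x atTop (𝓝 xs) := by
  have hyP : ∀ k, P (y k) = y k := by
    intro k
    induction k with
    | zero => exact hy0
    | succ k ih => rw [hy k, map_add, map_smul, ih, ← Module.End.mul_apply, hPP.eq]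
  have hdescent : ∀ k, ‖y (k + 1) - P ys‖ ^ 2 + a * (2 - b) * ‖x (k + 1) - xs‖ ^ 2 ≤
      ‖y k - P ys‖ ^ 2 := by
    intro k
    obtain ⟨hak, hbk⟩ := hδ (k + 1)
    have hstep := hf.uzawa_descent hP hPP hxs hfeas (hyP k) (hx k) (ha.le.trans hak)
    rw [← hy k] at hstep
    have hrate : a * (2 - b) ≤ δ (k + 1) * (2 - δ (k + 1)) :=
      mul_le_mul hak (by linarith) (by linarith) (ha.le.trans hak)
    nlinarith [mul_le_mul_of_nonneg_right hrate (sq_nonneg ‖x (k + 1) - xs‖)]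
  have hsq := tendsto_zero_of_add_mul_le (V := fun k => ‖y k - P ys‖ ^ 2)
    (D := fun k => ‖x (k + 1) - xs‖ ^ 2) (mul_pos ha (by linarith)) (fun _ => sq_nonneg _)
    (fun _ => sq_nonneg _) hdescent
  rw [← tendsto_add_atTop_iff_nat 1, tendsto_iff_norm_sub_tendsto_zero]
  simpa [Real.sqrt_sq (norm_nonneg _)] using hsq.sqrt

end Uzawa

section Frobenius

open scoped RealInnerProductSpace

attribute [local instance] Matrix.frobeniusNormedAddCommGroup Matrix.frobeniusNormedSpace

variable {n₁ n₂ : ℕ}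

theorem frob_eq_norm (A : Matrix (Fin n₁) (Fin n₂) ℝ) : frob A = ‖A‖ := by
  simp [frob, frobenius_norm_def, Real.sqrt_eq_rpow]

noncomputable local instance frobeniusInnerProductSpace :
    InnerProductSpace ℝ (Matrix (Fin n₁) (Fin n₂) ℝ) where
  inner := mInner
  norm_sq_eq_re_inner A := by
    rw [← frob_eq_norm, frob, Real.sq_sqrt (by positivity)]
    simp [mInner, sq]
  conj_inner_symm A B := by simp [mInner, mul_comm]
  add_left A B C := by simp [mInner, add_mul, Finset.sum_add_distrib]
  smul_left A B c := by simp [mInner, Finset.mul_sum, mul_assoc]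

def projSetLinearMap (Ω : Finset (Fin n₁ × Fin n₂)) :
    Matrix (Fin n₁) (Fin n₂) ℝ →ₗ[ℝ] Matrix (Fin n₁) (Fin n₂) ℝ where
  toFun := projSet Ω
  map_add' A B := by ext i j; by_cases h : (i, j) ∈ Ω <;> simp [projSet, h]
  map_smul' c A := by ext i j; by_cases h : (i, j) ∈ Ω <;> simp [projSet, h]

theorem projSetLinearMap_apply (Ω : Finset (Fin n₁ × Fin n₂)) (A : Matrix (Fin n₁) (Fin n₂) ℝ) :
    projSetLinearMap Ω A = projSet Ω A := rfl

theorem mInner_eq_inner (A B : Matrix (Fin n₁) (Fin n₂) ℝ) : mInner A B = ⟪A, B⟫ := rfl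

theorem isSymmetric_projSetLinearMap (Ω : Finset (Fin n₁ × Fin n₂)) :
    (projSetLinearMap Ω).IsSymmetric := fun A B => by
  change mInner (projSet Ω A) B = mInner A (projSet Ω B)
  simp only [mInner, projSet, of_apply, ite_mul, mul_ite, zero_mul, mul_zero]

theorem isIdempotentElem_projSetLinearMap (Ω : Finset (Fin n₁ × Fin n₂)) :
    IsIdempotentElem (projSetLinearMap Ω) := by
  ext A i j
  by_cases h : (i, j) ∈ Ω <;> simp [projSetLinearMap, projSet, h]

end Frobenius

/-- If `0 < inf δ_k ≤ sup δ_k < 2`, the SVT iterates `X^k = D_τ(Y^{k-1})`,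
`Y^k = Y^{k-1} + δ_k P_Ω(M - X^k)` (with `Y⁰ = 0`, and `X^{k}` characterized as the
prox minimizer) converge to the unique solution of:
minimize `τ‖X‖_* + (1/2)‖X‖_F²` subject to `P_Ω(X) = P_Ω(M)`. Existence of a primal-dual
optimal pair (saddle point of the Lagrangian) is assumed. -/
theorem svt_convergence (n₁ n₂ : ℕ) (τ : ℝ) (hτ : 0 < τ)
    (Ω : Finset (Fin n₁ × Fin n₂)) (M : Matrix (Fin n₁) (Fin n₂) ℝ)
    (δ : ℕ → ℝ)
    (hδ : ∃ a b : ℝ, 0 < a ∧ b < 2 ∧ ∀ k, a ≤ δ k ∧ δ k ≤ b)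
    (X Y : ℕ → Matrix (Fin n₁) (Fin n₂) ℝ)
    (hY0 : Y 0 = 0)
    (hX : ∀ k, IsMinOn (fun Z => τ * nuclearNorm Z + (1 / 2) * frob (Z - Y k) ^ 2)
        Set.univ (X (k + 1)))
    (hY : ∀ k, Y (k + 1) = Y k + δ (k + 1) • projSet Ω (M - X (k + 1)))
    (hsaddle : ∃ (Xs Ys : Matrix (Fin n₁) (Fin n₂) ℝ),
      (∀ X', ftau τ Xs + mInner Ys (projSet Ω (M - Xs)) ≤
        ftau τ X' + mInner Ys (projSet Ω (M - X'))) ∧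
      (∀ Y', ftau τ Xs + mInner Y' (projSet Ω (M - Xs)) ≤
        ftau τ Xs + mInner Ys (projSet Ω (M - Xs)))) :
    ∃ Xopt : Matrix (Fin n₁) (Fin n₂) ℝ,
      projSet Ω Xopt = projSet Ω M ∧
      (∀ Z, projSet Ω Z = projSet Ω M → ftau τ Xopt ≤ ftau τ Z) ∧
      (∀ Z, projSet Ω Z = projSet Ω M → ftau τ Z = ftau τ Xopt → Z = Xopt) ∧
      Tendsto (fun k => X k) atTop (nhds Xopt) := by
  -- The Frobenius structure induces the product topology of the statement (definitionally).
  let : NormedAddCommGroup (Matrix (Fin n₁) (Fin n₂) ℝ) := frobeniusNormedAddCommGroup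
  let : NormedSpace ℝ (Matrix (Fin n₁) (Fin n₂) ℝ) := frobeniusNormedSpace
  let := frobeniusInnerProductSpace (n₁ := n₁) (n₂ := n₂)
  obtain ⟨a, b, ha, hb, hab⟩ := hδ
  obtain ⟨Xs, Ys, hmin, hmax⟩ := hsaddle
  have hf : ConvexOn ℝ Set.univ fun Z : Matrix (Fin n₁) (Fin n₂) ℝ => τ * nuclearNorm Z :=
    convexOn_nuclearNorm.smul hτ.le
  simp only [ftau, frob_eq_norm, mInner_eq_inner, ← projSetLinearMap_apply] at hX hY hmin hmax ⊢
  set P := projSetLinearMap Ω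
  have hP : P.IsSymmetric := isSymmetric_projSetLinearMap Ω
  have hfeas : P Xs = P M := by
    have h0 := eq_zero_of_forall_inner_le fun Y' => by linarith [hmax Y']
    rwa [map_sub, sub_eq_zero, eq_comm] at h0
  have hprox := hP.isMinOn_prox_of_forall_lagrangian_le (f := fun Z => τ * nuclearNorm Z) hmin
  have hopt := fun Z (hZ : P Z = P M) =>
    hf.add_half_norm_sq_le_of_map_eq hP hprox (z := Z) (hZ.trans hfeas.symm)
  refine ⟨Xs, hfeas, fun Z hZ => ?_, fun Z hZ hZopt => ?_, ?_⟩
  · linarith [hopt Z hZ, sq_nonneg ‖Z - Xs‖]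
  · have h := hopt Z hZ
    rw [hZopt] at h
    have hdist : ‖Z - Xs‖ ^ 2 = 0 := by linarith [sq_nonneg ‖Z - Xs‖]
    simpa [sub_eq_zero] using hdist
  · exact hf.tendsto_uzawa hP (isIdempotentElem_projSetLinearMap Ω) hprox hfeas ha hb hab
      (by rw [hY0, map_zero]) hX hY
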